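/- The kernel L(z,w;η) associated with a stable polynomial p of degree (n,m) satisfies the symmetry L(z,w;η) = z^{2n} (w η̄)^{m−1} conj(L(1/z̄, 1/w̄; 1/η̄)); equivalently, writing L(z,w;η) = Σ_{j=0}^{m−1} a_j(z,w) η̄^j, one has a_k = ã_{m−1−k}, where ã_j(z,w) = z^{2n} w^{m−1} conj(a_j(1/z̄,1/w̄)). -/

import Mathlib

open Complex MeasureTheory Finset
open scoped ComplexInnerProductSpace

noncomputable section

/-- Evaluation of a bivariate polynomial with coefficient array `c i j`,
supported on `0 ≤ i ≤ n`, `0 ≤ j ≤ m`. -/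
def evalP (n m : ℕ) (c : ℕ → ℕ → ℂ) (z w : ℂ) : ℂ :=
  ∑ i ∈ Finset.range (n + 1), ∑ j ∈ Finset.range (m + 1), c i j * z ^ i * w ^ j

/-- `p` is stable: nonvanishing on the closed bidisk. -/
def Stable (n m : ℕ) (c : ℕ → ℕ → ℂ) : Prop :=
  ∀ z w : ℂ, ‖z‖ ≤ 1 → ‖w‖ ≤ 1 → evalP n m c z w ≠ 0

/-- `p` has degree exactly `n` in `z` and `m` in `w`. -/
def DegreeNM (n m : ℕ) (c : ℕ → ℕ → ℂ) : Prop :=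
  (∃ j, c n j ≠ 0) ∧ (∃ i, c i m ≠ 0)

/-- Coefficients of the reflected polynomial `p̃(z,w) = zⁿ wᵐ conj (p (1/z̄, 1/w̄))`. -/
def reflC (n m : ℕ) (c : ℕ → ℕ → ℂ) : ℕ → ℕ → ℂ :=
  fun i j => star (c (n - i) (m - j))

/-- The Laurent monomial `z^i w^j` as a function on the torus, `z = e^{iθ}`, `w = e^{iφ}`. -/
def tmono (i j : ℤ) : ℝ → ℝ → ℂ :=
  fun θ φ => Complex.exp (((i : ℂ) * (θ : ℂ) + (j : ℂ) * (φ : ℂ)) * Complex.I)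

/-- A bivariate polynomial as a function on the torus. -/
def onT (n m : ℕ) (c : ℕ → ℕ → ℂ) : ℝ → ℝ → ℂ :=
  fun θ φ => evalP n m c (Complex.exp ((θ : ℂ) * Complex.I)) (Complex.exp ((φ : ℂ) * Complex.I))

/-- The inner product `⟨f,g⟩ = ∫_{𝕋²} f ḡ dσ/|p|²` of `L²(dσ/|p|²)`. -/
def ip (n m : ℕ) (c : ℕ → ℕ → ℂ) (f g : ℝ → ℝ → ℂ) : ℂ :=
  (1 / (2 * Real.pi) ^ 2 : ℂ) *
    ∫ θ in (0 : ℝ)..(2 * Real.pi), ∫ φ in (0 : ℝ)..(2 * Real.pi),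
      f θ φ * star (g θ φ) / ((Complex.normSq (onT n m c θ φ) : ℝ) : ℂ)

/-- Numerator of the Christoffel–Darboux-type kernel `L`:
`zⁿ (p(z,w) conj(p(1/z̄,η)) − p̃(z,w) conj(p̃(1/z̄,η)))`. -/
def Lnum (n m : ℕ) (c : ℕ → ℕ → ℂ) (z w η : ℂ) : ℂ :=
  z ^ n * (evalP n m c z w * star (evalP n m c (star z)⁻¹ η)
    - evalP n m (reflC n m c) z w * star (evalP n m (reflC n m c) (star z)⁻¹ η))

/-- The kernel built from coefficient arrays `a k` for the polynomials `a_k(z,w)`: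
`L(z,w;η) = Σ_{k<m} a_k(z,w) η̄^k`. -/
def Lsum (n m : ℕ) (a : ℕ → ℕ → ℕ → ℂ) (z w η : ℂ) : ℂ :=
  ∑ k ∈ Finset.range m, evalP (2 * n) (m - 1) (a k) z w * (star η) ^ k

/-- `a` is the coefficient array of the kernel `L` associated with `p`:
`(1 - w η̄) L(z,w;η) = Lnum(z,w;η)` for all `z ≠ 0`. -/
def IsLCoeff (n m : ℕ) (c : ℕ → ℕ → ℂ) (a : ℕ → ℕ → ℕ → ℂ) : Prop :=
  ∀ z w η : ℂ, z ≠ 0 → (1 - w * star η) * Lsum n m a z w η = Lnum n m c z w η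

end

/-! Reflecting `p` turns the numerator of `L` into minus its own reflection:
`Lnum(z,w;η) = -z^{2n} (wη̄)^m conj Lnum(1/z̄,1/w̄;1/η̄)`. The reflection of the denominator
`1 - wη̄` is `-(wη̄)⁻¹ (1 - wη̄)`, so `L` has the claimed symmetry wherever `wη̄ ≠ 1`. Both sides
are polynomials in `η̄` of degree `< m`, so their coefficients agree: `a_k = ã_{m-1-k}`, and the
symmetry of `L` then holds for every `η ≠ 0`. -/

open Polynomial in
theorem eq_of_sum_mul_pow_eq_off_finite {K : Type*} [Field K] [Infinite K] {m : ℕ}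
    {d e : ℕ → K} {S : Set K} (hS : S.Finite)
    (h : ∀ s ∉ S, ∑ k ∈ Finset.range m, d k * s ^ k = ∑ k ∈ Finset.range m, e k * s ^ k) :
    ∀ k < m, d k = e k := by
  let P (f : ℕ → K) : K[X] := ∑ k ∈ Finset.range m, C (f k) * X ^ k
  have eval_P (f : ℕ → K) (s : K) : (P f).eval s = ∑ k ∈ Finset.range m, f k * s ^ k := by
    simp [P, eval_finsetSum]
  have coeff_P (f : ℕ → K) {k : ℕ} (hk : k < m) : (P f).coeff k = f k := by
    simp [P, finsetSum_coeff, hk]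
  have hP : P d = P e := eq_of_infinite_eval_eq _ _ <|
    hS.infinite_compl.mono fun s hs => by simpa [eval_P] using h s hs
  intro k hk
  rw [← coeff_P d hk, ← coeff_P e hk, hP]

theorem evalP_reflC (n m : ℕ) (c : ℕ → ℕ → ℂ) {z w : ℂ} (hz : z ≠ 0) (hw : w ≠ 0) :
    evalP n m (reflC n m c) z w
      = z ^ n * w ^ m * star (evalP n m c (star z)⁻¹ (star w)⁻¹) := by
  simp only [evalP, reflC, star_sum, Finset.mul_sum]
  rw [← Finset.sum_range_reflect]
  refine Finset.sum_congr rfl fun i hi => ?_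
  rw [← Finset.sum_range_reflect]
  refine Finset.sum_congr rfl fun j hj => ?_
  have hi : i ≤ n := Nat.lt_succ_iff.mp (Finset.mem_range.mp hi)
  have hj : j ≤ m := Nat.lt_succ_iff.mp (Finset.mem_range.mp hj)
  simp only [add_tsub_cancel_right, Nat.sub_sub_self hi, Nat.sub_sub_self hj,
    pow_sub₀ z hz hi, pow_sub₀ w hw hj, star_mul, star_pow, star_inv₀, star_star]
  ring

theorem Lnum_eq_neg_reflect (n m : ℕ) (c : ℕ → ℕ → ℂ) {z w η : ℂ}
    (hz : z ≠ 0) (hw : w ≠ 0) (hη : η ≠ 0) :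
    Lnum n m c z w η
      = -(z ^ (2 * n) * (w * star η) ^ m *
          star (Lnum n m c (star z)⁻¹ (star w)⁻¹ (star η)⁻¹)) := by
  have inv_ne {x : ℂ} (hx : x ≠ 0) : (star x)⁻¹ ≠ 0 := inv_ne_zero (star_ne_zero.mpr hx)
  have hη' : star η ≠ 0 := star_ne_zero.mpr hη
  simp only [Lnum, evalP_reflC n m c hz hw, evalP_reflC n m c (inv_ne hz) hη,
    evalP_reflC n m c (inv_ne hz) (inv_ne hw), evalP_reflC n m c hz (inv_ne hη),
    star_mul, star_sub, star_pow, star_inv₀, star_star, inv_inv]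
  generalize evalP n m c z w = A, evalP n m c (star z)⁻¹ η = B,
    evalP n m c (star z)⁻¹ (star w)⁻¹ = C, evalP n m c z (star η)⁻¹ = D
  simp only [two_mul, pow_add, inv_pow, mul_pow]
  field_simp
  ring

theorem Lsum_reflect (n m : ℕ) (a : ℕ → ℕ → ℕ → ℂ) {z w η : ℂ}
    (hz : z ≠ 0) (hw : w ≠ 0) (hη : η ≠ 0) :
    z ^ (2 * n) * (w * star η) ^ (m - 1) * star (Lsum n m a (star z)⁻¹ (star w)⁻¹ (star η)⁻¹)
      = Lsum n m (fun k => reflC (2 * n) (m - 1) (a (m - 1 - k))) z w η := by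
  simp only [Lsum, evalP_reflC _ _ _ hz hw, star_sum, Finset.mul_sum]
  rw [← Finset.sum_range_reflect]
  refine Finset.sum_congr rfl fun k hk => ?_
  have hk : k ≤ m - 1 := Nat.le_pred_of_lt (Finset.mem_range.mp hk)
  have hη' : star η ≠ 0 := star_ne_zero.mpr hη
  simp only [star_mul, star_pow, star_inv₀, star_star, inv_pow, pow_sub₀ _ hη' hk, mul_pow]
  field_simp

theorem Lsum_eq_Lsum_reflect_of_ne_one (n m : ℕ) (c : ℕ → ℕ → ℂ) (a : ℕ → ℕ → ℕ → ℂ)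
    (ha : IsLCoeff n m c a) {z w η : ℂ} (hz : z ≠ 0) (hw : w ≠ 0) (hη : η ≠ 0)
    (hwη : w * star η ≠ 1) :
    Lsum n m a z w η = Lsum n m (fun k => reflC (2 * n) (m - 1) (a (m - 1 - k))) z w η := by
  rw [← Lsum_reflect n m a hz hw hη]
  obtain _ | m := m
  · simp [Lsum]
  refine mul_left_cancel₀ (sub_ne_zero.mpr hwη.symm) ?_
  rw [ha z w η hz, Lnum_eq_neg_reflect n m.succ c hz hw hη,
    ← ha _ _ _ (inv_ne_zero (star_ne_zero.mpr hz))]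
  have hη' : star η ≠ 0 := star_ne_zero.mpr hη
  simp only [star_mul, star_sub, star_one, star_inv₀, star_star, add_tsub_cancel_right, pow_succ]
  field_simp
  ring

theorem evalP_eq_evalP_reflC_of_isLCoeff (n m : ℕ) (c : ℕ → ℕ → ℂ) (a : ℕ → ℕ → ℕ → ℂ)
    (ha : IsLCoeff n m c a) {k : ℕ} (hk : k < m) {z w : ℂ} (hz : z ≠ 0) (hw : w ≠ 0) :
    evalP (2 * n) (m - 1) (a k) z w
      = evalP (2 * n) (m - 1) (reflC (2 * n) (m - 1) (a (m - 1 - k))) z w := by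
  refine eq_of_sum_mul_pow_eq_off_finite (d := fun j => evalP (2 * n) (m - 1) (a j) z w)
    (e := fun j => evalP (2 * n) (m - 1) (reflC (2 * n) (m - 1) (a (m - 1 - j))) z w)
    ((Set.finite_singleton w⁻¹).insert 0) (fun s hs => ?_) k hk
  simp only [Set.mem_insert_iff, Set.mem_singleton_iff, not_or] at hs
  have hws : w * star (star s) ≠ 1 := by
    rw [star_star]
    exact fun h => hs.2 (eq_inv_of_mul_eq_one_right h)
  simpa [Lsum] using
    Lsum_eq_Lsum_reflect_of_ne_one n m c a ha hz hw (star_ne_zero.mpr hs.1) hws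

theorem statement4_general (n m : ℕ) (c : ℕ → ℕ → ℂ)
    (a : ℕ → ℕ → ℕ → ℂ) (ha : IsLCoeff n m c a) :
    (∀ z w η : ℂ, z ≠ 0 → w ≠ 0 → η ≠ 0 →
      Lsum n m a z w η
        = z ^ (2 * n) * (w * star η) ^ (m - 1) *
            star (Lsum n m a (star z)⁻¹ (star w)⁻¹ (star η)⁻¹)) ∧
    (∀ k : ℕ, k < m → ∀ z w : ℂ, z ≠ 0 → w ≠ 0 →
      evalP (2 * n) (m - 1) (a k) z w
        = z ^ (2 * n) * w ^ (m - 1) *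
            star (evalP (2 * n) (m - 1) (a (m - 1 - k)) (star z)⁻¹ (star w)⁻¹)) := by
  refine ⟨fun z w η hz hw hη => ?_, fun k hk z w hz hw => ?_⟩
  · rw [Lsum_reflect n m a hz hw hη]
    exact Finset.sum_congr rfl fun k hk => by
      rw [evalP_eq_evalP_reflC_of_isLCoeff n m c a ha (Finset.mem_range.mp hk) hz hw]
  · rw [evalP_eq_evalP_reflC_of_isLCoeff n m c a ha hk hz hw, evalP_reflC _ _ _ hz hw]

/-- Symmetry of the kernel: L(z,w;η) = z^{2n} (wη̄)^{m-1} conj(L(1/z̄,1/w̄;1/η̄)),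
equivalently a_k = ã_{m-1-k}. -/
theorem statement4 (n m : ℕ) (c : ℕ → ℕ → ℂ)
    (hstable : Stable n m c) (hdeg : DegreeNM n m c)
    (a : ℕ → ℕ → ℕ → ℂ) (ha : IsLCoeff n m c a) :
    (∀ z w η : ℂ, z ≠ 0 → w ≠ 0 → η ≠ 0 →
      Lsum n m a z w η
        = z ^ (2 * n) * (w * star η) ^ (m - 1) *
            star (Lsum n m a (star z)⁻¹ (star w)⁻¹ (star η)⁻¹)) ∧
    (∀ k : ℕ, k < m → ∀ z w : ℂ, z ≠ 0 → w ≠ 0 →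
      evalP (2 * n) (m - 1) (a k) z w
        = z ^ (2 * n) * w ^ (m - 1) *
            star (evalP (2 * n) (m - 1) (a (m - 1 - k)) (star z)⁻¹ (star w)⁻¹)) :=
  statement4_general n m c a ha
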